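/- arXiv:math/0512605 — 3 statements merged into one kernel-verified Lean document; each statement's English description precedes it below -/
import Mathlib

section
/- Let G be a group equipped with a left-invariant metric dist such that for every real r the ball {x ∈ G : dist(1,x) ≤ r} is a finite set. Then for every g ∈ G and every real R there exists a real R' such that for all h ∈ G: if dist(1, h·c) ≥ R' for every element c of the centralizer of g (i.e. every c with c·g = g·c), then dist(1, h·g·h⁻¹) > R. (This is the existence of the constant K_pre(g) established in the first step of the proof of Lemma 4.13 of the paper.) -/
/-!
Only finitely many conjugates of `g` lie in the ball of radius `R`; fix for each of them one
conjugator. Two conjugators of the same conjugate differ on the right by an element of the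
centralizer of `g`, so if `h * g * h⁻¹` is short, then the coset `h · Cent(g)` contains one of
these finitely many fixed conjugators, and is therefore close to `1`.
-/

theorem commute_inv_mul_of_conj_eq {G : Type*} [Group G] {g h h' : G}
    (hconj : h' * g * h'⁻¹ = h * g * h⁻¹) : Commute (h⁻¹ * h') g := by
  calc h⁻¹ * h' * g = h⁻¹ * (h' * g * h'⁻¹) * h' := by group
    _ = g * (h⁻¹ * h') := by rw [hconj]; group

theorem exists_bound_commute_of_conj_mem {G : Type*} [Group G] (f : G → ℝ) (g : G)
    {S : Set G} (hS : S.Finite) :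
    ∃ B : ℝ, ∀ h : G, h * g * h⁻¹ ∈ S → ∃ c : G, Commute c g ∧ f (h * c) ≤ B := by
  choose! rep hrep using fun k (hk : k ∈ Set.range fun h : G => h * g * h⁻¹) => hk
  obtain ⟨B, hB⟩ := (hS.image (f ∘ rep)).bddAbove
  refine ⟨B, fun h hmem => ⟨h⁻¹ * rep (h * g * h⁻¹), ?_, ?_⟩⟩
  · exact commute_inv_mul_of_conj_eq (hrep _ ⟨h, rfl⟩)
  · rw [mul_inv_cancel_left]
    exact hB ⟨_, hmem, rfl⟩

theorem exists_Kpre_general {G : Type*} [Group G] [MetricSpace G]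
    (hfin : ∀ r : ℝ, {x : G | dist (1 : G) x ≤ r}.Finite)
    (g : G) (R : ℝ) :
    ∃ R' : ℝ, ∀ h : G,
      (∀ c : G, c * g = g * c → R' ≤ dist (1 : G) (h * c)) →
      R < dist (1 : G) (h * g * h⁻¹) := by
  obtain ⟨B, hB⟩ := exists_bound_commute_of_conj_mem (dist (1 : G)) g (hfin R)
  refine ⟨B + 1, fun h hfar => lt_of_not_ge fun hshort => ?_⟩
  obtain ⟨c, hc, hclose⟩ := hB h hshort
  linarith [hfar c hc]

/-- Existence of the constant `K_pre(g)` from the first step of the proof of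
Lemma 4.13: in a group with a left-invariant metric with finite balls, if the
coset `h · Cent(g)` is far from the identity, then `h * g * h⁻¹` is long. -/
theorem exists_Kpre {G : Type*} [Group G] [MetricSpace G]
    (hinv : ∀ a x y : G, dist (a * x) (a * y) = dist x y)
    (hfin : ∀ r : ℝ, {x : G | dist (1 : G) x ≤ r}.Finite)
    (g : G) (R : ℝ) :
    ∃ R' : ℝ, ∀ h : G,
      (∀ c : G, c * g = g * c → R' ≤ dist (1 : G) (h * c)) →
      R < dist (1 : G) (h * g * h⁻¹) :=
  exists_Kpre_general hfin g R
end

section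
/- Let G be a group equipped with a left-invariant metric dist, let h, g ∈ G, and set ρ = dist(1, h). Suppose there exist w, w' ∈ G lying in order on a geodesic from 1 to g, i.e. dist(1, w) + dist(w, w') + dist(w', g) = dist(1, g), such that dist(w, h) < ρ/2 and dist(w', g·h) < ρ/2. Then dist(1, h⁻¹·g·h) < dist(1, g). (This is the first assertion of Lemma 4.16 of the paper: conjugating by h strictly shortens g when both h and g·h pass within distance ρ/2 of a geodesic from 1 to g.) -/
/-- First assertion of Lemma 4.16 of the paper: conjugating by `h` strictly
shortens `g` when both `h` and `g·h` pass within distance `ρ/2` of a geodesic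
from `1` to `g`, where `ρ = dist 1 h`. -/
theorem dist_conj_lt_of_close_to_geodesic {G : Type*} [Group G] [MetricSpace G]
    (hinv : ∀ a x y : G, dist (a * x) (a * y) = dist x y)
    (h g w w' : G)
    (hgeo : dist (1 : G) w + dist w w' + dist w' g = dist (1 : G) g)
    (hw : dist w h < dist (1 : G) h / 2)
    (hw' : dist w' (g * h) < dist (1 : G) h / 2) :
    dist (1 : G) (h⁻¹ * g * h) < dist (1 : G) g := by
  have key : dist (1 : G) (h⁻¹ * g * h) = dist h (g * h) := by
    have := hinv h 1 (h⁻¹ * g * h)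
    simpa [mul_assoc] using this.symm
  have hρ : dist g (g * h) = dist (1 : G) h := by
    have := hinv g 1 h
    simpa using this
  have h1 : dist (1 : G) h ≤ dist (1 : G) w + dist w h := dist_triangle 1 w h
  have h2 : dist g (g * h) ≤ dist w' g + dist w' (g * h) := by
    calc dist g (g * h) ≤ dist g w' + dist w' (g * h) := dist_triangle _ _ _
    _ = dist w' g + dist w' (g * h) := by rw [dist_comm]
  have h3 : dist h (g * h) ≤ dist h w + dist w w' + dist w' (g * h) :=
    dist_triangle4 _ _ _ _
  rw [key]
  have hcw : dist h w = dist w h := dist_comm _ _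
  linarith [hρ ▸ h2]
end

section
/- Let H be a group in which every maximal abelian subgroup is malnormal, i.e. for every subgroup M of H that is commutative and maximal among commutative subgroups of H, and every g ∈ H with g ∉ M, the intersection M ∩ g·M·g⁻¹ is the trivial subgroup. Then every abelian-by-cyclic subgroup of H is abelian: if E is a subgroup of H and A is a normal subgroup of E such that A is commutative and the quotient E/A is cyclic, then E is commutative. (This is the assertion, in the proof of Theorem 5.4 of the paper, that malnormality of maximal abelian subgroups forces any abelian-by-cyclic subgroup to be abelian.) -/
/-- If every maximal abelian subgroup of `H` is malnormal, then every
abelian-by-cyclic subgroup of `H` is abelian (used in the proof of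
Theorem 5.4 of the paper). -/
theorem abelian_by_cyclic_is_abelian {H : Type*} [Group H]
    (hmal : ∀ M : Subgroup H, IsMulCommutative M →
      (∀ N : Subgroup H, IsMulCommutative N → M ≤ N → N = M) →
      ∀ g : H, g ∉ M → ∀ x : H, x ∈ M → g⁻¹ * x * g ∈ M → x = 1)
    (E : Subgroup H) (A : Subgroup E) [A.Normal]
    (hAc : IsMulCommutative A) (hcyc : IsCyclic (E ⧸ A)) :
    IsMulCommutative E := by
  by_cases hA : A = ⊥
  · -- E ≅ E ⧸ A is cyclic, hence abelian
    subst hA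
    have hinj : Function.Injective (QuotientGroup.mk' (⊥ : Subgroup E)) := by
      rw [← MonoidHom.ker_eq_bot_iff, QuotientGroup.ker_mk']
    letI := hcyc.commGroup
    exact ⟨⟨fun a b => hinj (by simp [mul_comm])⟩⟩
  · -- pick a nontrivial element of A
    obtain ⟨a, ha1⟩ := Subgroup.ne_bot_iff_exists_ne_one.mp hA
    have haA := a.2
    set A' : Subgroup H := A.map E.subtype with hA'
    have hA'c : IsMulCommutative A' := by
      constructor; constructor
      rintro ⟨x, hx⟩ ⟨y, hy⟩
      obtain ⟨x', hx', rfl⟩ := hx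
      obtain ⟨y', hy', rfl⟩ := hy
      have := hAc.is_comm.comm ⟨x', hx'⟩ ⟨y', hy'⟩
      apply Subtype.ext
      simpa [Subtype.ext_iff] using congrArg (fun z : A => ((z : E) : H)) this
    -- Zorn: maximal commutative subgroup containing A'
    obtain ⟨M, hA'M, hMmem, hMmax⟩ :=
      zorn_le_nonempty₀ {N : Subgroup H | IsMulCommutative N}
        (fun c hcs hchain y hyc => by
          refine ⟨sSup c, ?_, fun z hz => le_sSup hz⟩
          constructor; constructor
          rintro ⟨x, hx⟩ ⟨y', hy'⟩
          rw [Subgroup.mem_sSup_of_directedOn ⟨y, hyc⟩ hchain.directedOn] at hx hy'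
          obtain ⟨Nx, hNx, hxN⟩ := hx
          obtain ⟨Ny, hNy, hyN⟩ := hy'
          apply Subtype.ext
          rcases hchain.total hNx hNy with h | h
          · have := (hcs hNy).is_comm.comm ⟨x, h hxN⟩ ⟨y', hyN⟩
            simpa [Subtype.ext_iff] using this
          · have := (hcs hNx).is_comm.comm ⟨x, hxN⟩ ⟨y', h hyN⟩
            simpa [Subtype.ext_iff] using this)
        A' hA'c
    have hMmax' : ∀ N : Subgroup H, IsMulCommutative N → M ≤ N → N = M :=
      fun N hN hMN => le_antisymm (hMmax hN hMN) hMN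
    -- every element of E lies in M
    have hEM : ∀ e : H, e ∈ E → e ∈ M := by
      intro e he
      by_contra hem
      have haM : ((a : E) : H) ∈ M := hA'M ⟨a, haA, rfl⟩
      have hconj : e⁻¹ * ((a : E) : H) * e ∈ M := by
        apply hA'M
        refine ⟨(⟨e, he⟩ : E)⁻¹ * (a : E) * ⟨e, he⟩, ?_, rfl⟩
        exact Subgroup.Normal.conj_mem' ‹A.Normal› (a : E) haA ⟨e, he⟩
      have := hmal M hMmem hMmax' e hem _ haM hconj
      exact ha1 (Subtype.ext (Subtype.ext (by simpa using this)))
    constructor; constructor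
    rintro ⟨x, hx⟩ ⟨y, hy⟩
    apply Subtype.ext
    have := hMmem.is_comm.comm ⟨x, hEM x hx⟩ ⟨y, hEM y hy⟩
    simpa [Subtype.ext_iff] using this
end
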